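/- arXiv:2504.02194 — 3 statements merged into one kernel-verified Lean document; each statement's English description precedes it below -/
import Mathlib

section
/- Let n > 3f, and for a transaction let committed_ois be a multiset of at least n − f ordering indicators of which at most f come from Byzantine replicas (the rest from correct replicas). Then the (f+1)-th smallest value of committed_ois is at least the minimum ordering indicator assigned by a correct replica and at most the maximum ordering indicator assigned by a correct replica. -/
/-!
In the sorted list, the `f + 1` entries up to index `f` are all at most the entry `a` at index `f`,
and the `card - f ≥ f + 1` entries from index `f` on are all at least `a`. Each of these two groups
has more than `f` members, so it cannot consist of Byzantine values alone and contains a correct one.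
-/

section SortedList

variable {α : Type*} [LinearOrder α] {l : List α} {i : ℕ}

theorem List.Pairwise.le_getElem_of_mem_take (hl : l.Pairwise (· ≤ ·)) (hi : i < l.length)
    {x : α} (hx : x ∈ l.take (i + 1)) : x ≤ l[i] := by
  rw [List.take_succ_eq_append_getElem hi, List.mem_append, List.mem_singleton] at hx
  rcases hx with hx | rfl
  · exact hl.rel_of_mem_take_of_mem_drop hx (List.drop_eq_getElem_cons hi ▸ List.mem_cons_self)
  · exact le_rfl

theorem List.Pairwise.getElem_le_of_mem_drop (hl : l.Pairwise (· ≤ ·)) (hi : i < l.length)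
    {x : α} (hx : x ∈ l.drop i) : l[i] ≤ x := by
  rw [List.drop_eq_getElem_cons hi, List.mem_cons] at hx
  rcases hx with rfl | hx
  · exact le_rfl
  · refine hl.rel_of_mem_take_of_mem_drop ?_ hx
    rw [List.take_succ_eq_append_getElem hi]
    exact List.mem_append_right _ (List.mem_singleton_self _)

theorem List.Pairwise.succ_le_length_filter_le_getElem (hl : l.Pairwise (· ≤ ·))
    (hi : i < l.length) : i + 1 ≤ (l.filter (· ≤ l[i])).length := by
  have htake : (l.take (i + 1)).filter (· ≤ l[i]) = l.take (i + 1) :=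
    List.filter_eq_self.2 fun x hx => decide_eq_true (hl.le_getElem_of_mem_take hi hx)
  refine le_trans ?_ ((l.take_sublist (i + 1)).filter _).length_le
  rw [htake, List.length_take]
  omega

theorem List.Pairwise.length_sub_le_length_filter_getElem_le (hl : l.Pairwise (· ≤ ·))
    (hi : i < l.length) : l.length - i ≤ (l.filter (l[i] ≤ ·)).length := by
  have hdrop : (l.drop i).filter (l[i] ≤ ·) = l.drop i :=
    List.filter_eq_self.2 fun x hx => decide_eq_true (hl.getElem_le_of_mem_drop hi hx)
  refine le_trans ?_ ((l.drop_sublist i).filter _).length_le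
  rw [hdrop, List.length_drop]

end SortedList

theorem Multiset.exists_mem_right_of_card_le_of_lt_card_filter {β : Type*} {B C : Multiset β}
    {f : ℕ} (p : β → Prop) [DecidablePred p] (hB : card B ≤ f)
    (h : f < card ((B + C).filter p)) : ∃ c ∈ C, p c := by
  have hBp : card (B.filter p) ≤ f := (card_le_card (filter_le p B)).trans hB
  rw [filter_add, card_add] at h
  obtain ⟨c, hc⟩ := card_pos_iff_exists_mem.1 (by omega : 0 < card (C.filter p))
  exact ⟨c, mem_of_mem_filter hc, of_mem_filter hc⟩

theorem aoi_between_correct_min_max_general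
    (n f : ℕ) (hnf : 3 * f < n)
    (B C : Multiset ℕ) (hB : Multiset.card B ≤ f)
    (hsize : n - f ≤ Multiset.card (B + C)) :
    (∃ c ∈ C, c ≤ ((B + C).sort (· ≤ ·)).getD f 0) ∧
    (∃ c ∈ C, ((B + C).sort (· ≤ ·)).getD f 0 ≤ c) := by
  set l := (B + C).sort (· ≤ ·)
  have hl : l.Pairwise (· ≤ ·) := Multiset.pairwise_sort _ _
  have hlen : l.length = Multiset.card (B + C) := Multiset.length_sort _
  have hf : f < l.length := by omega
  have hcard (p : ℕ → Prop) [DecidablePred p] :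
      Multiset.card ((B + C).filter p) = (l.filter p).length := by
    rw [← Multiset.sort_eq (B + C) (· ≤ ·), Multiset.filter_coe, Multiset.coe_card]
  rw [List.getD_eq_getElem l 0 hf]
  refine ⟨Multiset.exists_mem_right_of_card_le_of_lt_card_filter _ hB ?_,
    Multiset.exists_mem_right_of_card_le_of_lt_card_filter _ hB ?_⟩
  · rw [hcard]
    exact hl.succ_le_length_filter_le_getElem hf
  · rw [hcard]
    have := hl.length_sub_le_length_filter_getElem_le hf
    omega

theorem aoi_between_correct_min_max
    (n f : ℕ) (hnf : 3 * f < n)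
    (B C : Multiset ℕ) (hB : Multiset.card B ≤ f)
    (hC : C ≠ 0)
    (hsize : n - f ≤ Multiset.card (B + C)) :
    (∃ c ∈ C, c ≤ ((B + C).sort (· ≤ ·)).getD f 0) ∧
    (∃ c ∈ C, ((B + C).sort (· ≤ ·)).getD f 0 ≤ c) :=
  aoi_between_correct_min_max_general n f hnf B C hB hsize
end

section
/- (Ordering Linearizability of AOI assignment) Suppose n > 3f. For transactions T1 and T2, let AOI(T_i) be the (f+1)-th smallest element of a multiset of at least n − f ordering indicators, at most f of which are Byzantine and the rest lie in the set ois_i^C of correct indicators for T_i. If every element of ois_1^C is strictly smaller than every element of ois_2^C, then AOI(T1) < AOI(T2). -/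
/-!
Of the at least `n - f > 2f` committed indicators for `T₁` at most `f` are Byzantine, so at least
`f + 1` are correct, hence `≤ max ois₁`; thus the `(f + 1)`-th smallest is `≤ max ois₁`. Only
Byzantine indicators for `T₂` can lie below `min ois₂`, and there are at most `f` of them, so the
`(f + 1)`-th smallest is `≥ min ois₂`.
-/

namespace List

variable {α : Type*} [LinearOrder α] {l : List α} {k : ℕ}

theorem Pairwise.le_getElem_of_mem_take_s3 (hl : l.Pairwise (· ≤ ·)) (hk : k < l.length)
    {a : α} (ha : a ∈ l.take k) : a ≤ l[k] := by
  rw [← take_append_drop k l, drop_eq_getElem_cons hk, pairwise_append] at hl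
  exact hl.2.2 a ha l[k] mem_cons_self

theorem Pairwise.getElem_le_of_mem_drop_s3 (hl : l.Pairwise (· ≤ ·)) (hk : k < l.length)
    {b : α} (hb : b ∈ l.drop k) : l[k] ≤ b := by
  rw [← take_append_drop k l, drop_eq_getElem_cons hk, pairwise_append, pairwise_cons] at hl
  rw [drop_eq_getElem_cons hk, mem_cons] at hb
  obtain rfl | hb := hb
  · rfl
  · exact hl.2.1.1 b hb

theorem Pairwise.getElem_le_of_lt_countP (hl : l.Pairwise (· ≤ ·)) (hk : k < l.length) {M : α}
    (hM : k < l.countP (· ≤ M)) : l[k] ≤ M := by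
  by_contra! hlt
  have hdrop : (l.drop k).countP (· ≤ M) = 0 :=
    countP_eq_zero.mpr fun b hb => by
      simpa using hlt.trans_le (hl.getElem_le_of_mem_drop_s3 hk hb)
  have htake : (l.take k).countP (· ≤ M) ≤ k := countP_le_length.trans (length_take_le k l)
  rw [← take_append_drop k l, countP_append, hdrop] at hM
  omega

theorem Pairwise.le_getElem_of_countP_lt_le (hl : l.Pairwise (· ≤ ·)) (hk : k < l.length) {m : α}
    (hm : l.countP (· < m) ≤ k) : m ≤ l[k] := by
  by_contra! hlt
  have htake : (l.take k).countP (· < m) = k := by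
    rw [countP_eq_length.mpr fun a ha => by simpa using (hl.le_getElem_of_mem_take_s3 hk ha).trans_lt hlt]
    exact length_take_of_le hk.le
  have hdrop : 0 < (l.drop k).countP (· < m) := by
    rw [drop_eq_getElem_cons hk, countP_cons]
    simp [hlt]
  rw [← take_append_drop k l, countP_append, htake] at hm
  omega

end List

namespace Multiset

variable {α : Type*} [LinearOrder α] {S : Multiset α} {k : ℕ}

theorem sort_getD_le_of_lt_countP (d : α) {M : α} (hM : k < S.countP (· ≤ M)) :
    (S.sort (· ≤ ·)).getD k d ≤ M := by
  have hk : k < (S.sort (· ≤ ·)).length := by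
    rw [length_sort]
    exact hM.trans_le (countP_le_card _ _)
  rw [List.getD_eq_getElem _ _ hk]
  refine (pairwise_sort S _).getElem_le_of_lt_countP hk ?_
  rwa [← coe_countP, sort_eq]

theorem le_sort_getD_of_countP_lt_le (d : α) (hk : k < card S) {m : α}
    (hm : S.countP (· < m) ≤ k) : m ≤ (S.sort (· ≤ ·)).getD k d := by
  have hk' : k < (S.sort (· ≤ ·)).length := by rwa [length_sort]
  rw [List.getD_eq_getElem _ _ hk']
  refine (pairwise_sort S _).le_getElem_of_countP_lt_le hk' ?_
  rwa [← coe_countP, sort_eq]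

variable {C : Finset α}

theorem countP_le_card_filter_notMem {p : α → Prop} [DecidablePred p] (hC : ∀ c ∈ C, ¬p c) :
    S.countP p ≤ card (S.filter (· ∉ C)) := by
  rw [countP_eq_card_filter]
  exact card_le_card (monotone_filter_right S fun x hx hxC => hC x hxC hx)

theorem sort_getD_le_of_forall_mem_le (d : α) (hS : 2 * k < card S)
    (hbyz : card (S.filter (· ∉ C)) ≤ k) {M : α} (hM : ∀ c ∈ C, c ≤ M) :
    (S.sort (· ≤ ·)).getD k d ≤ M := by
  refine sort_getD_le_of_lt_countP d ?_
  have hsplit := card_eq_countP_add_countP (· ≤ M) S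
  have hcompl : S.countP (fun x => ¬x ≤ M) ≤ k :=
    (countP_le_card_filter_notMem fun c hc => not_not.mpr (hM c hc)).trans hbyz
  omega

theorem le_sort_getD_of_forall_mem_le (d : α) (hS : k < card S)
    (hbyz : card (S.filter (· ∉ C)) ≤ k) {m : α} (hm : ∀ c ∈ C, m ≤ c) :
    m ≤ (S.sort (· ≤ ·)).getD k d :=
  le_sort_getD_of_countP_lt_le d hS
    ((countP_le_card_filter_notMem fun c hc => not_lt.mpr (hm c hc)).trans hbyz)

end Multiset

theorem ordering_linearizability_aoi
    (n f : ℕ) (hnf : 3 * f < n)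
    (ois1 ois2 : Finset ℕ) (h1 : ois1.Nonempty) (h2 : ois2.Nonempty)
    (S1 S2 : Multiset ℕ)
    (hS1size : n - f ≤ Multiset.card S1)
    (hS2size : n - f ≤ Multiset.card S2)
    (hS1byz : Multiset.card (S1.filter (fun x => x ∉ ois1)) ≤ f)
    (hS2byz : Multiset.card (S2.filter (fun x => x ∉ ois2)) ≤ f)
    (hsep : ∀ a ∈ ois1, ∀ b ∈ ois2, a < b) :
    (S1.sort (· ≤ ·)).getD f 0 < (S2.sort (· ≤ ·)).getD f 0 := by
  have hAOI1 : (S1.sort (· ≤ ·)).getD f 0 ≤ ois1.max' h1 :=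
    Multiset.sort_getD_le_of_forall_mem_le 0 (by omega) hS1byz (ois1.le_max' · ·)
  have hAOI2 : ois2.min' h2 ≤ (S2.sort (· ≤ ·)).getD f 0 :=
    Multiset.le_sort_getD_of_forall_mem_le 0 (by omega) hS2byz (ois2.min'_le · ·)
  exact hAOI1.trans_lt ((hsep _ (ois1.max'_mem h1) _ (ois2.min'_mem h2)).trans_le hAOI2)
end

section
/- (Edge-direction majority under γ-agreement) Assume n > (2γ+1)f/(2γ−1) with 1/2 < γ ≤ 1, n − f correct replicas and f Byzantine replicas, where each replica casts at most one vote on the relative order of transactions T1, T2. If at least γ·(n−f) correct replicas vote T1-before-T2, then the number of T2-before-T1 votes (all f Byzantine votes plus all remaining correct votes) is strictly less than (n−f)/2. -/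
/-!
Byzantine replicas add at most `f` votes for `T2` before `T1`, and correct ones at most
`(1 - γ)(n - f)`. Hence the count stays below `(n - f)/2` exactly when
`f < (γ - 1/2)(n - f)`, which after clearing the positive denominator `2γ - 1` is the bound
`(2γ + 1) f < (2γ - 1) n` on `n`.
-/

theorem add_one_sub_mul_lt_half_of_div_lt {K : Type*} [Field K] [LinearOrder K]
    [IsStrictOrderedRing K] {γ n f : K} (hγ : 1 / 2 < γ)
    (hn : (2 * γ + 1) * f / (2 * γ - 1) < n) :
    f + (1 - γ) * (n - f) < (n - f) / 2 := by
  rw [div_lt_iff₀ (by linarith)] at hn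
  linarith

theorem edge_direction_majority_general (n f c12 c21 b : ℕ) (γ : ℝ)
    (hγ1 : 1 / 2 < γ)
    (hn : (n : ℝ) > (2 * γ + 1) * f / (2 * γ - 1))
    (htot : (c12 : ℝ) + c21 ≤ (n : ℝ) - f)
    (hc12 : γ * ((n : ℝ) - f) ≤ c12)
    (hb : b ≤ f) :
    (b : ℝ) + c21 < ((n : ℝ) - f) / 2 := by
  have hc21 : (c21 : ℝ) ≤ (1 - γ) * ((n : ℝ) - f) := by linarith
  calc (b : ℝ) + c21 ≤ f + (1 - γ) * ((n : ℝ) - f) := add_le_add (mod_cast hb) hc21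
    _ < ((n : ℝ) - f) / 2 := add_one_sub_mul_lt_half_of_div_lt hγ1 hn

theorem edge_direction_majority (n f c12 c21 b : ℕ) (γ : ℝ)
    (hγ1 : 1 / 2 < γ) (hγ2 : γ ≤ 1)
    (hn : (n : ℝ) > (2 * γ + 1) * f / (2 * γ - 1))
    (htot : (c12 : ℝ) + c21 ≤ (n : ℝ) - f)
    (hc12 : γ * ((n : ℝ) - f) ≤ c12)
    (hb : b ≤ f) :
    (b : ℝ) + c21 < ((n : ℝ) - f) / 2 :=
  edge_direction_majority_general n f c12 c21 b γ hγ1 hn htot hc12 hb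
end
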